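/- (No cycles of join operations) Let R be the binary relation on partitions of the finite player set N defined by: R(Π, Π') holds iff Π' results from Π by an admissible join operation. Then the transitive closure of R is irreflexive; i.e., no partition can be reached from itself by a nonempty finite sequence of admissible join operations. -/
import Mathlib


open Finset

variable {ι : Type*}

/-- A partition of the finite player set: pairwise disjoint nonempty coalitions covering everyone. -/
def IsPartition [DecidableEq ι] [Fintype ι] (P : Finset (Finset ι)) : Prop :=
  (∀ S ∈ P, S.Nonempty) ∧
  (∀ S ∈ P, ∀ T ∈ P, S ≠ T → Disjoint S T) ∧
  P.biUnion id = Finset.univ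

/-- The value of a coalition: v(S) = ∑_{j ∈ S} φ_j(S). -/
def coalitionValue (φ : Finset ι → ι → ℝ) (S : Finset ι) : ℝ := ∑ j ∈ S, φ S j

/-- Total social welfare of a partition: W(Π) = ∑_{S ∈ Π} v(S). -/
def welfare (φ : Finset ι → ι → ℝ) (P : Finset (Finset ι)) : ℝ :=
  ∑ S ∈ P, coalitionValue φ S

/-- `JoinStep φ P P'` : the partition `P'` results from `P` by an admissible join operation:
a player `i` moves from its coalition `Sm ∈ P` to a coalition `Sk ∈ P ∪ {∅}`, `Sk ≠ Sm`,
with `v(Sk ∪ {i}) + v(Sm \ {i}) > v(Sk) + v(Sm)`; empty sets are removed from the result. -/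
def JoinStep [DecidableEq ι] (φ : Finset ι → ι → ℝ) (P P' : Finset (Finset ι)) : Prop :=
  ∃ (i : ι) (Sm Sk : Finset ι),
    Sm ∈ P ∧ i ∈ Sm ∧ (Sk ∈ P ∨ Sk = ∅) ∧ Sk ≠ Sm ∧
    coalitionValue φ Sk + coalitionValue φ Sm <
      coalitionValue φ (insert i Sk) + coalitionValue φ (Sm.erase i) ∧
    P' = ((P \ {Sm, Sk}) ∪ {Sm.erase i, insert i Sk}).erase ∅

lemma coalitionValue_empty (φ : Finset ι → ι → ℝ) : coalitionValue φ ∅ = 0 := by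
  simp [coalitionValue]

lemma welfare_lt_of_joinStep [DecidableEq ι] [Fintype ι] (φ : Finset ι → ι → ℝ)
    {P P' : Finset (Finset ι)} (hP : IsPartition P) (h : JoinStep φ P P') :
    welfare φ P < welfare φ P' := by
  obtain ⟨hne, hdisj, -⟩ := hP
  obtain ⟨i, Sm, Sk, hSm, hiSm, hSk, hkm, hlt, hP'⟩ := h
  have hemp : ∅ ∉ P := fun h => by simpa using hne ∅ h
  set Q : Finset (Finset ι) := P \ {Sm, Sk} with hQ
  -- members of Q are disjoint from Sm and don't contain i
  have hQmem : ∀ S ∈ Q, S ∈ P ∧ S ≠ Sm ∧ S ≠ Sk := by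
    intro S hS
    simp only [hQ, mem_sdiff, mem_insert, mem_singleton] at hS
    tauto
  have hQdisj : ∀ S ∈ Q, Disjoint S Sm := by
    intro S hS
    obtain ⟨hSP, hSm', -⟩ := hQmem S hS
    exact hdisj S hSP Sm hSm hSm'
  -- the two new coalitions are distinct and not in Q
  have hnew : Sm.erase i ≠ insert i Sk := by
    intro h
    have : i ∈ Sm.erase i := h ▸ mem_insert_self i Sk
    simp at this
  have hni1 : Sm.erase i ∉ Q := by
    intro hmem
    have hd := hQdisj _ hmem
    have hsub : Sm.erase i ⊆ Sm := erase_subset i Sm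
    have : Sm.erase i = ∅ :=
      Finset.disjoint_self_iff_empty _ |>.mp
        (Finset.disjoint_of_subset_right hsub hd)
    exact hemp (this ▸ (hQmem _ hmem).1)
  have hni2 : insert i Sk ∉ Q := by
    intro hmem
    have hd := hQdisj _ hmem
    exact (Finset.disjoint_left.mp hd (mem_insert_self i Sk)) hiSm
  have hdisjQT : Disjoint Q ({Sm.erase i, insert i Sk} : Finset (Finset ι)) := by
    rw [Finset.disjoint_right]
    intro S hS
    simp only [mem_insert, mem_singleton] at hS
    rcases hS with rfl | rfl
    · exact hni1
    · exact hni2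
  -- sum over P'
  have hsumP' : welfare φ P' =
      (∑ S ∈ Q, coalitionValue φ S) +
        (coalitionValue φ (Sm.erase i) + coalitionValue φ (insert i Sk)) := by
    rw [welfare, hP', Finset.sum_erase _ (coalitionValue_empty φ),
      Finset.sum_union hdisjQT, Finset.sum_pair hnew]
  -- sum over P
  have hsumP : welfare φ P =
      (∑ S ∈ Q, coalitionValue φ S) + (coalitionValue φ Sm + coalitionValue φ Sk) := by
    rcases hSk with hSkP | rfl
    · have hsub : ({Sm, Sk} : Finset (Finset ι)) ⊆ P := by
        intro S hS
        simp only [mem_insert, mem_singleton] at hS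
        rcases hS with rfl | rfl <;> assumption
      rw [welfare, ← Finset.sum_sdiff hsub, Finset.sum_pair (Ne.symm hkm), hQ]
    · have : Q = P.erase Sm := by
        ext S
        simp only [hQ, mem_sdiff, mem_insert, mem_singleton, mem_erase]
        constructor
        · rintro ⟨h1, h2⟩; exact ⟨fun h => h2 (Or.inl h), h1⟩
        · rintro ⟨h1, h2⟩
          refine ⟨h2, fun h => ?_⟩
          rcases h with h | h
          · exact h1 h
          · exact hemp (h ▸ h2)
      rw [welfare, this, coalitionValue_empty, add_zero,
        Finset.sum_erase_add _ _ hSm]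
  rw [hsumP, hsumP']
  have := hlt
  linarith

/-- No cycles of join operations: the transitive closure of the admissible-join relation
(on partitions of the player set) is irreflexive. -/
theorem transGen_joinStep_irrefl [DecidableEq ι] [Fintype ι]
    (φ : Finset ι → ι → ℝ) (P : Finset (Finset ι)) :
    ¬ Relation.TransGen (fun A B => IsPartition A ∧ JoinStep φ A B) P P := by
  intro h
  have key : ∀ B, Relation.TransGen (fun A B => IsPartition A ∧ JoinStep φ A B) P B →
      welfare φ P < welfare φ B := by
    intro B hB
    induction hB with
    | single h => exact welfare_lt_of_joinStep φ h.1 h.2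
    | tail _ h ih => exact ih.trans (welfare_lt_of_joinStep φ h.1 h.2)
  exact lt_irrefl _ (key P h)
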